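/- Topological representation theorem in Hausdorff spaces: Let D be an EDC-lattice satisfying (Ext Ô): a ≰ b → ∃c, a + c = 1 and b + c ≠ 1; (U-rich ≪): a ≪ b → ∃c, b + c = 1 and ¬(a C c); (U-rich Ĉ): ¬(a Ĉ b) → ∃c ∃d, a + c = 1, b + d = 1 and ¬(c C d); (Ext C): a ≠ 1 → ∃b ≠ 0, ¬(a C b); and (Nor 1): ¬(a C b) → ∃c ∃d, c + d = 1, ¬(a C c) and ¬(b C d). Then there exist a compact Hausdorff (T2) topological space X and a map h : D → (subsets of X) such that: every h(a) is regular closed; h is injective; h(0) = ∅, h(1) = X; h(a+b) = h(a) ∪ h(b); h(a·b) = Cl(Int(h(a) ∩ h(b))); a ≤ b iff h(a) ⊆ h(b); a C b iff h(a) ∩ h(b) ≠ ∅; a Ĉ b iff Int(h(a)) ∪ Int(h(b)) ≠ X; a ≪ b iff h(a) ⊆ Int(h(b)); and h is dually dense: for every regular closed α ≠ X there exists a ∈ D with α ⊆ h(a) and h(a) ≠ X. -/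

import Mathlib

universe u

/-- Extended distributive contact lattice (EDC-lattice): a bounded distributive
lattice with contact `C`, dual contact `Cd` and nontangential part-of `Ll`
satisfying the 23 axioms. -/
structure EDC (D : Type u) [DistribLattice D] [BoundedOrder D] where
  C : D → D → Prop
  Cd : D → D → Prop
  Ll : D → D → Prop
  c1 : ∀ a b, C a b → a ≠ ⊥ ∧ b ≠ ⊥
  c2 : ∀ a a' b b', C a b → a ≤ a' → b ≤ b' → C a' b'
  c3 : ∀ a b c, C a (b ⊔ c) → C a b ∨ C a c
  c4 : ∀ a b, C a b → C b a
  c5 : ∀ a b, a ⊓ b ≠ ⊥ → C a b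
  cd1 : ∀ a b, Cd a b → a ≠ ⊤ ∧ b ≠ ⊤
  cd2 : ∀ a a' b b', Cd a b → a' ≤ a → b' ≤ b → Cd a' b'
  cd3 : ∀ a b c, Cd a (b ⊓ c) → Cd a b ∨ Cd a c
  cd4 : ∀ a b, Cd a b → Cd b a
  cd5 : ∀ a b, a ⊔ b ≠ ⊤ → Cd a b
  ll1 : Ll ⊥ ⊥
  ll2 : Ll ⊤ ⊤
  ll3 : ∀ a b, Ll a b → a ≤ b
  ll4 : ∀ a a' b b', a' ≤ a → Ll a b → b ≤ b' → Ll a' b'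
  ll5 : ∀ a b c, Ll a c → Ll b c → Ll (a ⊔ b) c
  ll6 : ∀ a b c, Ll c a → Ll c b → Ll c (a ⊓ b)
  ll7 : ∀ a b c d, Ll a b → Ll (b ⊓ c) d → Ll c (a ⊔ d) → Ll c d
  mc1 : ∀ a b c, C a b → Ll a c → C a (b ⊓ c)
  mc2 : ∀ a b c d, ¬ C a (b ⊓ c) → C a b → ¬ C (a ⊓ d) b → Cd d c
  mcd1 : ∀ a b c, Cd a b → Ll c a → Cd a (b ⊔ c)
  mcd2 : ∀ a b c d, ¬ Cd a (b ⊔ c) → Cd a b → ¬ Cd (a ⊔ d) b → C d c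
  mll1 : ∀ a b c, ¬ Cd a b → Ll (a ⊓ c) b → Ll c b
  mll2 : ∀ a b c, ¬ C a b → Ll b (a ⊔ c) → Ll b c

/-- A filter of a bounded (distributive) lattice. -/
def EDCFilter {D : Type u} [DistribLattice D] [BoundedOrder D] (F : Set D) : Prop :=
  ⊤ ∈ F ∧ (∀ a b : D, a ∈ F → a ≤ b → b ∈ F) ∧ (∀ a b : D, a ∈ F → b ∈ F → a ⊓ b ∈ F)

/-- An ideal of a bounded (distributive) lattice. -/
def EDCIdeal {D : Type u} [DistribLattice D] [BoundedOrder D] (I : Set D) : Prop :=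
  ⊥ ∈ I ∧ (∀ a b : D, a ∈ I → b ≤ a → b ∈ I) ∧ (∀ a b : D, a ∈ I → b ∈ I → a ⊔ b ∈ I)

/-- A prime filter: a proper filter such that `a ⊔ b ∈ F` implies `a ∈ F` or `b ∈ F`. -/
def PrimeFilter {D : Type u} [DistribLattice D] [BoundedOrder D] (F : Set D) : Prop :=
  EDCFilter F ∧ ⊥ ∉ F ∧ ∀ a b : D, a ⊔ b ∈ F → a ∈ F ∨ b ∈ F

/-- The canonical relation `R^c` between (prime) filters of an EDC-lattice. -/
def Rc {D : Type u} [DistribLattice D] [BoundedOrder D] (E : EDC D) (Γ Δ : Set D) : Prop :=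
  ∀ a b : D,
    (a ∈ Γ → b ∈ Δ → E.C a b) ∧
    (a ∉ Γ → b ∉ Δ → E.Cd a b) ∧
    (a ∈ Γ → b ∉ Δ → ¬ E.Ll a b) ∧
    (a ∉ Γ → b ∈ Δ → ¬ E.Ll b a)

/-!
The points of the space are the clusters (maximal clans) of `E`, and the sets
`rep a = {Γ | a ∈ Γ}` form a basis of closed sets. Clans containing two elements in contact are
glued from two prime filters given by the prime ideal theorem. An ultrafilter `𝒰` converges to
any cluster containing the clan `{a | rep a ∈ 𝒰}`, which gives compactness. (Nor 1) makes the set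
of elements in contact with all members of a clan prime, so a cluster contains every such element;
this separates distinct clusters. (Ext Ô) and (Ext C) show that `rep b` is regular closed with
interior the union of the `(rep c)ᶜ` over `b ⊔ c = ⊤`, and compactness reduces `≪` and `Ĉ` to a
single such `c`, where the U-richness axioms apply.
-/

open Set Topology

section PrimeFilterTheorem

variable {D : Type u} [DistribLattice D] [BoundedOrder D]

theorem exists_primeFilter_of_mem {T : Set D} (hT : IsUpperSet T)
    (hprime : ∀ x y, x ⊔ y ∈ T → x ∈ T ∨ y ∈ T) (hbot : ⊥ ∉ T) {a : D} (ha : a ∈ T) :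
    ∃ F, PrimeFilter F ∧ a ∈ F ∧ F ⊆ T := by
  have hI : Order.IsIdeal Tᶜ := ⟨hT.compl, ⟨⊥, hbot⟩,
    fun x hx y hy => ⟨x ⊔ y, fun h => (hprime x y h).elim hx hy, le_sup_left, le_sup_right⟩⟩
  obtain ⟨J, hJ, hTJ, hdisj⟩ := DistribLattice.prime_ideal_of_disjoint_filter_ideal
    (F := Order.PFilter.principal a) (I := hI.toIdeal)
    (disjoint_left.2 fun x hax hxT => hxT (hT hax ha))
  exact ⟨(J : Set D)ᶜ, ⟨⟨hJ.top_notMem, fun x y hx hxy hy => hx (J.lower hxy hy),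
    fun x y hx hy hxy => (hJ.mem_or_mem hxy).elim hx hy⟩, fun h => h J.bot_mem,
    fun x y hxy => not_and_or.1 fun h => hxy (J.sup_mem h.1 h.2)⟩,
    disjoint_left.1 hdisj le_rfl, fun x hx => by_contra fun hxT => hx (hTJ hxT)⟩

end PrimeFilterTheorem

namespace EDC

variable {D : Type u} [DistribLattice D] [BoundedOrder D]

section Clans

variable (E : EDC D)

structure IsClan (Γ : Set D) : Prop where
  top_mem : ⊤ ∈ Γ
  mem_of_le {a b : D} : a ∈ Γ → a ≤ b → b ∈ Γ
  mem_or_mem {a b : D} : a ⊔ b ∈ Γ → a ∈ Γ ∨ b ∈ Γ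
  contact {a b : D} : a ∈ Γ → b ∈ Γ → E.C a b

def contactSet (S : Set D) : Set D := {y | ∀ x ∈ S, E.C x y}

variable {E}

theorem IsClan.bot_notMem {Γ : Set D} (hΓ : E.IsClan Γ) : ⊥ ∉ Γ :=
  fun h => (E.c1 _ _ (hΓ.contact h h)).1 rfl

theorem isClan_of_primeFilter {F : Set D} (hF : PrimeFilter F) : E.IsClan F where
  top_mem := hF.1.1
  mem_of_le := hF.1.2.1 _ _
  mem_or_mem := hF.2.2 _ _
  contact ha hb := E.c5 _ _ fun h => hF.2.1 (h ▸ hF.1.2.2 _ _ ha hb)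

theorem IsClan.union {Γ Δ : Set D} (hΓ : E.IsClan Γ) (hΔ : E.IsClan Δ)
    (h : ∀ a ∈ Γ, ∀ b ∈ Δ, E.C a b) : E.IsClan (Γ ∪ Δ) where
  top_mem := Or.inl hΓ.top_mem
  mem_of_le := by
    rintro a b (ha | ha) hab
    exacts [Or.inl (hΓ.mem_of_le ha hab), Or.inr (hΔ.mem_of_le ha hab)]
  mem_or_mem := by
    rintro a b (hab | hab)
    exacts [(hΓ.mem_or_mem hab).imp Or.inl Or.inl, (hΔ.mem_or_mem hab).imp Or.inr Or.inr]
  contact := by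
    rintro a b (ha | ha) (hb | hb)
    exacts [hΓ.contact ha hb, h a ha b hb, E.c4 _ _ (h b hb a ha), hΔ.contact ha hb]

theorem isClan_sUnion {c : Set (Set D)} (hc : ∀ Γ ∈ c, E.IsClan Γ) (hchain : IsChain (· ⊆ ·) c)
    (hne : c.Nonempty) : E.IsClan (⋃₀ c) where
  top_mem := hne.elim fun Γ hΓ => ⟨Γ, hΓ, (hc Γ hΓ).top_mem⟩
  mem_of_le := fun ⟨Γ, hΓ, ha⟩ hab => ⟨Γ, hΓ, (hc Γ hΓ).mem_of_le ha hab⟩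
  mem_or_mem := fun ⟨Γ, hΓ, hab⟩ =>
    ((hc Γ hΓ).mem_or_mem hab).imp (fun ha => ⟨Γ, hΓ, ha⟩) fun hb => ⟨Γ, hΓ, hb⟩
  contact := by
    rintro a b ⟨Γ, hΓ, ha⟩ ⟨Δ, hΔ, hb⟩
    rcases hchain.total hΓ hΔ with h | h
    exacts [(hc Δ hΔ).contact (h ha) hb, (hc Γ hΓ).contact ha (h hb)]

theorem IsClan.exists_maximal {Γ : Set D} (hΓ : E.IsClan Γ) :
    ∃ Δ, Γ ⊆ Δ ∧ Maximal E.IsClan Δ :=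
  zorn_subset_nonempty {Δ | E.IsClan Δ}
    (fun c hc hchain hne => ⟨⋃₀ c, isClan_sUnion hc hchain hne, fun _ => subset_sUnion_of_mem⟩)
    Γ hΓ

theorem isUpperSet_contactSet (S : Set D) : IsUpperSet (E.contactSet S) :=
  fun _ _ hab ha x hx => E.c2 _ _ _ _ (ha x hx) le_rfl hab

theorem bot_notMem_contactSet {S : Set D} (hS : S.Nonempty) : ⊥ ∉ E.contactSet S :=
  fun h => hS.elim fun x hx => (E.c1 _ _ (h x hx)).2 rfl

theorem contactSet_mem_or_mem_of_inf_mem {S : Set D} (hS : ∀ x y, x ∈ S → y ∈ S → x ⊓ y ∈ S)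
    {a b : D} (hab : a ⊔ b ∈ E.contactSet S) : a ∈ E.contactSet S ∨ b ∈ E.contactSet S := by
  by_contra! h
  obtain ⟨⟨x, hx, hxa⟩, ⟨y, hy, hyb⟩⟩ := And.intro (not_forall₂.1 h.1) (not_forall₂.1 h.2)
  rcases E.c3 _ _ _ (hab _ (hS x y hx hy)) with h' | h'
  exacts [hxa (E.c2 _ _ _ _ h' inf_le_left le_rfl), hyb (E.c2 _ _ _ _ h' inf_le_right le_rfl)]

theorem exists_clan_of_contact {a b : D} (hab : E.C a b) :
    ∃ Γ, E.IsClan Γ ∧ a ∈ Γ ∧ b ∈ Γ := by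
  have hinf : ∀ x y, x ∈ ({b} : Set D) → y ∈ ({b} : Set D) → x ⊓ y ∈ ({b} : Set D) := by
    rintro _ _ rfl rfl
    exact inf_idem _
  obtain ⟨F, hF, haF, hFb⟩ := exists_primeFilter_of_mem (isUpperSet_contactSet {b})
    (fun _ _ => contactSet_mem_or_mem_of_inf_mem hinf) (bot_notMem_contactSet ⟨b, rfl⟩)
    (show a ∈ E.contactSet {b} by simpa [contactSet] using E.c4 _ _ hab)
  obtain ⟨G, hG, hbG, hGF⟩ := exists_primeFilter_of_mem (isUpperSet_contactSet F)
    (fun _ _ => contactSet_mem_or_mem_of_inf_mem hF.1.2.2) (bot_notMem_contactSet ⟨a, haF⟩)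
    (fun x hx => E.c4 _ _ (hFb hx b rfl))
  have hclan : E.IsClan (F ∪ G) :=
    (isClan_of_primeFilter hF).union (isClan_of_primeFilter hG) fun x hx y hy => hGF hy x hx
  exact ⟨F ∪ G, hclan, Or.inl haF, Or.inr hbG⟩

end Clans

section Axioms

variable (D) in
def ExtO : Prop := ∀ a b : D, ¬ a ≤ b → ∃ c : D, a ⊔ c = ⊤ ∧ b ⊔ c ≠ ⊤

variable (E : EDC D)

def ExtC : Prop := ∀ a : D, a ≠ ⊤ → ∃ b : D, b ≠ ⊥ ∧ ¬ E.C a b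

def Nor1 : Prop := ∀ a b : D, ¬ E.C a b → ∃ c d : D, c ⊔ d = ⊤ ∧ ¬ E.C a c ∧ ¬ E.C b d

def URichLl : Prop := ∀ a b : D, E.Ll a b → ∃ c : D, b ⊔ c = ⊤ ∧ ¬ E.C a c

def URichCd : Prop :=
  ∀ a b : D, ¬ E.Cd a b → ∃ c d : D, a ⊔ c = ⊤ ∧ b ⊔ d = ⊤ ∧ ¬ E.C c d

end Axioms

variable {E : EDC D}

theorem Nor1.contactSet_mem_or_mem (hNor : E.Nor1) {Γ : Set D} (hΓ : E.IsClan Γ) {a b : D}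
    (hab : a ⊔ b ∈ E.contactSet Γ) : a ∈ E.contactSet Γ ∨ b ∈ E.contactSet Γ := by
  by_contra! h
  obtain ⟨y₁, hy₁, hya⟩ := not_forall₂.1 h.1
  obtain ⟨y₂, hy₂, hyb⟩ := not_forall₂.1 h.2
  obtain ⟨c₁, d₁, hcd₁, hyc₁, had₁⟩ := hNor _ _ hya
  obtain ⟨c₂, d₂, hcd₂, hyc₂, hbd₂⟩ := hNor _ _ hyb
  have htop : (c₁ ⊔ c₂) ⊔ (d₁ ⊓ d₂) = ⊤ := by
    rw [sup_inf_left, eq_top_iff]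
    exact le_inf (hcd₁ ▸ sup_le_sup_right le_sup_left _) (hcd₂ ▸ sup_le_sup_right le_sup_right _)
  rcases hΓ.mem_or_mem (htop ▸ hΓ.top_mem) with hc | hd
  · rcases hΓ.mem_or_mem hc with hc₁ | hc₂
    exacts [hyc₁ (hΓ.contact hy₁ hc₁), hyc₂ (hΓ.contact hy₂ hc₂)]
  · rcases E.c3 _ _ _ (hab _ hd) with h' | h'
    · exact had₁ (E.c4 _ _ (E.c2 _ _ _ _ h' inf_le_left le_rfl))
    · exact hbd₂ (E.c4 _ _ (E.c2 _ _ _ _ h' inf_le_right le_rfl))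

variable (E) in
def Cluster : Type u := {Γ : Set D // Maximal E.IsClan Γ}

variable (E) in
def rep (a : D) : Set E.Cluster := {Γ | a ∈ Γ.1}

instance : TopologicalSpace E.Cluster := .generateFrom (range fun a => (E.rep a)ᶜ)

namespace Cluster

theorem isClan (Γ : E.Cluster) : E.IsClan Γ.1 := Γ.2.prop

theorem exists_superset {Γ : Set D} (hΓ : E.IsClan Γ) : ∃ Δ : E.Cluster, Γ ⊆ Δ.1 :=
  let ⟨Δ, hΓΔ, hΔ⟩ := hΓ.exists_maximal
  ⟨⟨Δ, hΔ⟩, hΓΔ⟩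

theorem eq_of_subset {Γ Δ : E.Cluster} (h : Γ.1 ⊆ Δ.1) : Γ = Δ :=
  Subtype.ext (Γ.2.eq_of_subset Δ.isClan h)

theorem mem_of_mem_contactSet (hNor : E.Nor1) (Δ : E.Cluster) {a : D}
    (ha : a ∈ E.contactSet Δ.1) : a ∈ Δ.1 := by
  obtain ⟨F, hF, haF, hFΔ⟩ := exists_primeFilter_of_mem (isUpperSet_contactSet Δ.1)
    (fun _ _ => hNor.contactSet_mem_or_mem Δ.isClan)
    (bot_notMem_contactSet ⟨⊤, Δ.isClan.top_mem⟩) ha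
  have hclan : E.IsClan (Δ.1 ∪ F) :=
    Δ.isClan.union (isClan_of_primeFilter hF) fun x hx y hy => hFΔ hy x hx
  exact Δ.2.2 hclan subset_union_left (Or.inr haF)

end Cluster

theorem mem_rep {Γ : E.Cluster} {a : D} : Γ ∈ E.rep a ↔ a ∈ Γ.1 := Iff.rfl

theorem rep_bot : E.rep ⊥ = ∅ :=
  eq_empty_of_forall_notMem fun Γ => Γ.isClan.bot_notMem

theorem rep_top : E.rep ⊤ = univ :=
  eq_univ_of_forall fun Γ => Γ.isClan.top_mem

theorem rep_mono : Monotone E.rep :=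
  fun _ _ hab Γ ha => Γ.isClan.mem_of_le ha hab

theorem rep_sup (a b : D) : E.rep (a ⊔ b) = E.rep a ∪ E.rep b :=
  Subset.antisymm (fun Γ h => Γ.isClan.mem_or_mem h)
    (union_subset (rep_mono le_sup_left) (rep_mono le_sup_right))

theorem isClosed_rep (a : D) : IsClosed (E.rep a) :=
  isOpen_compl_iff.1 (TopologicalSpace.isOpen_generateFrom_of_mem ⟨a, rfl⟩)

theorem isTopologicalBasis_compl_rep :
    TopologicalSpace.IsTopologicalBasis (range fun a => (E.rep a)ᶜ) where
  exists_subset_inter := by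
    rintro _ ⟨a, rfl⟩ _ ⟨b, rfl⟩ Γ hΓ
    exact ⟨(E.rep (a ⊔ b))ᶜ, ⟨a ⊔ b, rfl⟩, by rwa [rep_sup, compl_union], by
      rw [rep_sup, compl_union]⟩
  sUnion_eq := sUnion_eq_univ_iff.2 fun _ => ⟨_, ⟨⊥, rfl⟩, by simp [rep_bot]⟩
  eq_generateFrom := rfl

theorem mem_nhds_iff {Γ : E.Cluster} {s : Set E.Cluster} :
    s ∈ 𝓝 Γ ↔ ∃ a ∉ Γ.1, (E.rep a)ᶜ ⊆ s := by
  simp [isTopologicalBasis_compl_rep.mem_nhds_iff, mem_rep]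

instance : CompactSpace E.Cluster := by
  refine ⟨isCompact_iff_ultrafilter_le_nhds.2 fun 𝒰 _ => ?_⟩
  have hclan : E.IsClan {a | E.rep a ∈ 𝒰} :=
    { top_mem := show E.rep ⊤ ∈ 𝒰 from rep_top (E := E) ▸ Filter.univ_mem
      mem_of_le := fun ha hab => Filter.mem_of_superset ha (rep_mono hab)
      mem_or_mem := fun hab => Ultrafilter.union_mem_iff.1 (by rwa [← rep_sup])
      contact := fun ha hb =>
        let ⟨Γ, hΓa, hΓb⟩ := Ultrafilter.nonempty_of_mem (Filter.inter_mem ha hb)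
        Γ.isClan.contact hΓa hΓb }
  obtain ⟨Δ, hΔ⟩ := Cluster.exists_superset hclan
  refine ⟨Δ, mem_univ _, fun s hs => ?_⟩
  obtain ⟨a, haΔ, has⟩ := mem_nhds_iff.1 hs
  exact 𝒰.1.mem_of_superset (Ultrafilter.compl_mem_iff_notMem.2 fun ha => haΔ (hΔ ha)) has

theorem t2Space (hNor : E.Nor1) : T2Space E.Cluster := by
  refine ⟨fun Γ Δ hne => ?_⟩
  obtain ⟨a, haΓ, haΔ⟩ := not_subset.1 fun h => hne (Cluster.eq_of_subset h)
  obtain ⟨y, hyΔ, hay⟩ := not_forall₂.1 fun h => haΔ (Δ.mem_of_mem_contactSet hNor h)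
  obtain ⟨c, d, hcd, hyc, had⟩ := hNor _ _ hay
  refine ⟨(E.rep d)ᶜ, (E.rep c)ᶜ, (isClosed_rep d).isOpen_compl, (isClosed_rep c).isOpen_compl,
    fun hd => had (Γ.isClan.contact haΓ hd), fun hc => hyc (Δ.isClan.contact hyΔ hc), ?_⟩
  rw [disjoint_compl_left_iff_subset, compl_subset_iff_union, ← rep_sup, hcd, rep_top]

theorem exists_cluster_of_contact {a b : D} (h : E.C a b) : ∃ Γ : E.Cluster, a ∈ Γ.1 ∧ b ∈ Γ.1 :=
  let ⟨_, hΓ, ha, hb⟩ := exists_clan_of_contact h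
  let ⟨Δ, hΓΔ⟩ := Cluster.exists_superset hΓ
  ⟨Δ, hΓΔ ha, hΓΔ hb⟩

theorem contact_iff {a b : D} : E.C a b ↔ ¬ Disjoint (E.rep a) (E.rep b) := by
  rw [not_disjoint_iff]
  exact ⟨fun h => exists_cluster_of_contact h, fun ⟨Γ, ha, hb⟩ => Γ.isClan.contact ha hb⟩

theorem ExtC.exists_cluster_notMem (hC : E.ExtC) {a : D} (ha : a ≠ ⊤) :
    ∃ Γ : E.Cluster, a ∉ Γ.1 := by
  obtain ⟨b, hb, hab⟩ := hC a ha
  obtain ⟨Γ, hbΓ, -⟩ := exists_cluster_of_contact (E.c5 b b (by rwa [inf_idem]))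
  exact ⟨Γ, fun haΓ => hab (Γ.isClan.contact haΓ hbΓ)⟩

theorem ExtC.rep_eq_univ_iff (hC : E.ExtC) {a : D} : E.rep a = univ ↔ a = ⊤ := by
  refine ⟨fun h => by_contra fun ha => ?_, fun h => h ▸ rep_top⟩
  obtain ⟨Γ, hΓ⟩ := hC.exists_cluster_notMem ha
  exact hΓ (eq_univ_iff_forall.1 h Γ)

theorem ExtC.compl_rep_subset_rep_iff (hC : E.ExtC) {b c : D} :
    (E.rep c)ᶜ ⊆ E.rep b ↔ b ⊔ c = ⊤ := by
  rw [compl_subset_iff_union, union_comm, ← rep_sup, hC.rep_eq_univ_iff]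

theorem ExtC.mem_interior_rep_iff (hC : E.ExtC) {Γ : E.Cluster} {b : D} :
    Γ ∈ interior (E.rep b) ↔ ∃ c ∉ Γ.1, b ⊔ c = ⊤ := by
  simp only [mem_interior_iff_mem_nhds, mem_nhds_iff, hC.compl_rep_subset_rep_iff]

theorem rep_subset_rep_iff (hO : ExtO D) (hC : E.ExtC) {a b : D} :
    E.rep a ⊆ E.rep b ↔ a ≤ b := by
  refine ⟨fun h => by_contra fun hab => ?_, fun h => rep_mono h⟩
  obtain ⟨c, hac, hbc⟩ := hO a b hab
  obtain ⟨Γ, hΓ⟩ := hC.exists_cluster_notMem hbc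
  have hΓac : Γ ∈ E.rep a ∪ E.rep c := by rw [← rep_sup, hac, rep_top]; trivial
  exact hΓ (by rw [← mem_rep, rep_sup]; exact hΓac.imp (@h Γ) id)

theorem rep_injective (hO : ExtO D) (hC : E.ExtC) : Function.Injective E.rep :=
  fun _ _ h => le_antisymm ((rep_subset_rep_iff hO hC).1 h.le) ((rep_subset_rep_iff hO hC).1 h.ge)

theorem closure_interior_rep (hO : ExtO D) (hC : E.ExtC) (a : D) :
    closure (interior (E.rep a)) = E.rep a := by
  refine Subset.antisymm (closure_minimal interior_subset (isClosed_rep a)) fun Γ haΓ => ?_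
  refine mem_closure_iff_nhds.2 fun s hs => ?_
  obtain ⟨d, hdΓ, hds⟩ := mem_nhds_iff.1 hs
  obtain ⟨c, hac, hdc⟩ := hO a d fun had => hdΓ (Γ.isClan.mem_of_le haΓ had)
  obtain ⟨Δ, hΔ⟩ := hC.exists_cluster_notMem hdc
  exact ⟨Δ, hds fun hd => hΔ (Δ.isClan.mem_of_le hd le_sup_left),
    hC.mem_interior_rep_iff.2 ⟨c, fun hc => hΔ (Δ.isClan.mem_of_le hc le_sup_right), hac⟩⟩

theorem rep_inf (hO : ExtO D) (hC : E.ExtC) (a b : D) :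
    E.rep (a ⊓ b) = closure (interior (E.rep a ∩ E.rep b)) := by
  suffices interior (E.rep a ∩ E.rep b) = interior (E.rep (a ⊓ b)) by
    rw [this, closure_interior_rep hO hC]
  ext Γ
  simp only [interior_inter, mem_inter_iff, hC.mem_interior_rep_iff]
  constructor
  · rintro ⟨⟨c, hc, hac⟩, ⟨d, hd, hbd⟩⟩
    refine ⟨c ⊔ d, fun h => (Γ.isClan.mem_or_mem h).elim hc hd, ?_⟩
    rw [sup_inf_right, eq_top_iff]
    exact le_inf (hac ▸ sup_le_sup_left le_sup_left a) (hbd ▸ sup_le_sup_left le_sup_right b)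
  · rintro ⟨c, hc, h⟩
    exact ⟨⟨c, hc, top_unique (h ▸ sup_le_sup_right inf_le_left c)⟩,
      ⟨c, hc, top_unique (h ▸ sup_le_sup_right inf_le_right c)⟩⟩

theorem ExtC.exists_disjoint_rep_of_subset_interior (hC : E.ExtC) {K : Set E.Cluster}
    (hK : IsClosed K) {b : D} (h : K ⊆ interior (E.rep b)) :
    ∃ c, b ⊔ c = ⊤ ∧ Disjoint K (E.rep c) := by
  have : Nonempty {c // b ⊔ c = ⊤} := ⟨⟨⊤, sup_top_eq b⟩⟩
  have hempty : K ∩ ⋂ c : {c // b ⊔ c = ⊤}, E.rep c.1 = ∅ := by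
    refine eq_empty_of_forall_notMem fun Γ ⟨hΓK, hΓ⟩ => ?_
    obtain ⟨c, hcΓ, hc⟩ := hC.mem_interior_rep_iff.1 (h hΓK)
    exact hcΓ (mem_iInter.1 hΓ ⟨c, hc⟩)
  have hdir : Directed (· ⊇ ·) fun c : {c // b ⊔ c = ⊤} => E.rep c.1 := by
    rintro ⟨c, hc⟩ ⟨d, hd⟩
    exact ⟨⟨c ⊓ d, by rw [sup_inf_left, hc, hd, inf_idem]⟩, rep_mono inf_le_left,
      rep_mono inf_le_right⟩
  obtain ⟨⟨c, hc⟩, hKc⟩ := hK.isCompact.elim_directed_family_closed _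
    (fun c : {c // b ⊔ c = ⊤} => isClosed_rep c.1) hempty hdir
  exact ⟨c, hc, disjoint_iff_inter_eq_empty.2 hKc⟩

theorem ll_of_sup_eq_top {a b c : D} (hbc : b ⊔ c = ⊤) (hac : ¬ E.C a c) : E.Ll a b :=
  E.mll2 c a b (fun h => hac (E.c4 c a h))
    (E.ll4 ⊤ a ⊤ _ le_top E.ll2 (by rw [sup_comm, hbc]))

theorem contact_of_cd {a b c d : D} (hab : E.Cd a b) (hac : a ⊔ c = ⊤) (hbd : b ⊔ d = ⊤) :
    E.C c d :=
  E.mcd2 a b d c (fun h => (E.cd1 _ _ h).2 hbd) hab (fun h => (E.cd1 _ _ h).1 hac)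

theorem ll_iff (hC : E.ExtC) (hU : E.URichLl) {a b : D} :
    E.Ll a b ↔ E.rep a ⊆ interior (E.rep b) := by
  refine ⟨fun h Γ hΓ => ?_, fun h => ?_⟩
  · obtain ⟨c, hbc, hac⟩ := hU a b h
    exact hC.mem_interior_rep_iff.2 ⟨c, fun hc => hac (Γ.isClan.contact hΓ hc), hbc⟩
  · obtain ⟨c, hbc, hac⟩ := hC.exists_disjoint_rep_of_subset_interior (isClosed_rep a) h
    exact ll_of_sup_eq_top hbc fun h => contact_iff.1 h hac

theorem cd_iff (hC : E.ExtC) (hU : E.URichCd) {a b : D} :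
    E.Cd a b ↔ interior (E.rep a) ∪ interior (E.rep b) ≠ univ := by
  refine ⟨fun hab hcover => ?_, fun h => by_contra fun hab => h ?_⟩
  · obtain ⟨d, hbd, hd⟩ := hC.exists_disjoint_rep_of_subset_interior
      isOpen_interior.isClosed_compl (compl_subset_iff_union.2 hcover)
    obtain ⟨c, hac, hc⟩ := hC.exists_disjoint_rep_of_subset_interior (isClosed_rep d)
      (disjoint_compl_left_iff_subset.1 hd)
    exact contact_iff.1 (contact_of_cd hab hac hbd) hc.symm
  · obtain ⟨c, d, hac, hbd, hcd⟩ := hU a b hab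
    refine eq_univ_of_forall fun Γ => ?_
    by_cases hc : c ∈ Γ.1
    · exact Or.inr (hC.mem_interior_rep_iff.2 ⟨d, fun hd => hcd (Γ.isClan.contact hc hd), hbd⟩)
    · exact Or.inl (hC.mem_interior_rep_iff.2 ⟨c, hc, hac⟩)

theorem exists_rep_ne_univ_of_isClosed {α : Set E.Cluster} (hα : IsClosed α) (hne : α ≠ univ) :
    ∃ a, α ⊆ E.rep a ∧ E.rep a ≠ univ := by
  obtain ⟨Γ, hΓ⟩ := nonempty_compl.2 hne
  obtain ⟨a, haΓ, ha⟩ := mem_nhds_iff.1 (hα.isOpen_compl.mem_nhds hΓ)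
  exact ⟨a, compl_subset_compl.1 ha, fun h => haΓ (eq_univ_iff_forall.1 h Γ)⟩

end EDC

/-- topological representation theorem in compact Hausdorff spaces for
U-rich EDC-lattices satisfying (Ext C) and (Nor 1). -/
theorem stmt18 {D : Type u} [DistribLattice D] [BoundedOrder D] (E : EDC D)
    (hExtO : ∀ a b : D, ¬ a ≤ b → ∃ c : D, a ⊔ c = ⊤ ∧ b ⊔ c ≠ ⊤)
    (hUll : ∀ a b : D, E.Ll a b → ∃ c : D, b ⊔ c = ⊤ ∧ ¬ E.C a c)
    (hUcd : ∀ a b : D, ¬ E.Cd a b → ∃ c d : D, a ⊔ c = ⊤ ∧ b ⊔ d = ⊤ ∧ ¬ E.C c d)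
    (hExtC : ∀ a : D, a ≠ ⊤ → ∃ b : D, b ≠ ⊥ ∧ ¬ E.C a b)
    (hNor1 : ∀ a b : D, ¬ E.C a b → ∃ c d : D, c ⊔ d = ⊤ ∧ ¬ E.C a c ∧ ¬ E.C b d) :
    ∃ (X : Type u) (_ : TopologicalSpace X) (h : D → Set X),
      CompactSpace X ∧ T2Space X ∧
      (∀ a : D, closure (interior (h a)) = h a) ∧
      Function.Injective h ∧
      h ⊥ = ∅ ∧ h ⊤ = Set.univ ∧
      (∀ a b : D, h (a ⊔ b) = h a ∪ h b) ∧
      (∀ a b : D, h (a ⊓ b) = closure (interior (h a ∩ h b))) ∧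
      (∀ a b : D, a ≤ b ↔ h a ⊆ h b) ∧
      (∀ a b : D, E.C a b ↔ h a ∩ h b ≠ ∅) ∧
      (∀ a b : D, E.Cd a b ↔ interior (h a) ∪ interior (h b) ≠ Set.univ) ∧
      (∀ a b : D, E.Ll a b ↔ h a ⊆ interior (h b)) ∧
      (∀ α : Set X, closure (interior α) = α → α ≠ Set.univ →
        ∃ a : D, α ⊆ h a ∧ h a ≠ Set.univ) :=
  ⟨E.Cluster, inferInstance, E.rep, inferInstance, EDC.t2Space hNor1,
    EDC.closure_interior_rep hExtO hExtC, EDC.rep_injective hExtO hExtC, EDC.rep_bot,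
    EDC.rep_top, EDC.rep_sup, EDC.rep_inf hExtO hExtC,
    fun _ _ => (EDC.rep_subset_rep_iff hExtO hExtC).symm,
    fun _ _ => EDC.contact_iff.trans (not_congr disjoint_iff_inter_eq_empty),
    fun _ _ => EDC.cd_iff hExtC hUcd, fun _ _ => EDC.ll_iff hExtC hUll,
    fun _ hα => EDC.exists_rep_ne_univ_of_isClosed (hα ▸ isClosed_closure)⟩
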